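/- arXiv:1610.05755 — 2 statements merged into one kernel-verified Lean document; each statement's English description precedes it below -/
import Mathlib

section
/- Suppose on neighboring databases d, d' the count vectors n(d), n(d') ∈ ℤ^m differ by at most 1 in each coordinate. Then the mechanism that outputs argmax_j { n_j + Lap(1/γ) } with independent Laplace noise in each coordinate satisfies (2γ, 0)-differential privacy. -/
/-!
Fix the output `j` and condition on the noise of all other coordinates. What remains is the
event that `L j` lies in an up-set `S`, and passing from `n` to `n'` moves the threshold of that
up-set by at most `2`, so `S + 2` lies in the corresponding up-set `S'`. Since shifting the
argument of the Laplace density by `2` changes it by a factor at most `e^{2γ}`, the conditional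
probabilities satisfy `P(L j ∈ S) ≤ e^{2γ} P(L j ∈ S')`; integrating over the other
coordinates, which are independent of `L j`, gives the bound.
-/

open MeasureTheory ProbabilityTheory Real
open scoped ENNReal

section

variable {G : Type*} [MeasurableSpace G] [AddGroup G] [MeasurableAdd G]
  {μ : Measure G} [μ.IsAddRightInvariant] [SFinite μ]

lemma withDensity_le_mul_withDensity_of_le_mul_add {f : G → ℝ≥0∞} {C : ℝ≥0∞}
    (hC : C ≠ ∞) {a : G} (hf : ∀ x, f x ≤ C * f (x + a)) {S S' : Set G}
    (hSS' : ∀ x ∈ S, x + a ∈ S') :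
    μ.withDensity f S ≤ C * μ.withDensity f S' := by
  rw [withDensity_apply' _ S, withDensity_apply' _ S']
  calc ∫⁻ x in S, f x ∂μ
      ≤ ∫⁻ x in S, C * f (x + a) ∂μ := lintegral_mono fun x => hf x
    _ ≤ ∫⁻ x in (· + a) ⁻¹' S', C * f (x + a) ∂μ := lintegral_mono_set hSS'
    _ = C * ∫⁻ x in (· + a) ⁻¹' S', f (x + a) ∂μ := lintegral_const_mul' C _ hC
    _ = C * ∫⁻ y in S', f y ∂μ := by
      rw [(measurePreserving_add_right μ a).setLIntegral_comp_preimage_emb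
        (measurableEmbedding_addRight a)]

end

noncomputable def laplacePDF (γ x : ℝ) : ℝ := γ / 2 * exp (-γ * |x|)

lemma laplacePDF_le_exp_mul_laplacePDF_add {γ r a : ℝ} (hγ : 0 ≤ γ) (ha : |a| ≤ r)
    (x : ℝ) :
    laplacePDF γ x ≤ exp (r * γ) * laplacePDF γ (x + a) := by
  have htri : |x + a| ≤ |x| + r := (abs_add_le x a).trans (by linarith)
  have hexp : exp (-γ * |x|) ≤ exp (r * γ) * exp (-γ * |x + a|) := by
    rw [← exp_add]
    exact exp_le_exp.mpr (by nlinarith)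
  calc laplacePDF γ x ≤ γ / 2 * (exp (r * γ) * exp (-γ * |x + a|)) :=
        mul_le_mul_of_nonneg_left hexp (by positivity)
    _ = exp (r * γ) * laplacePDF γ (x + a) := by unfold laplacePDF; ring

lemma ProbabilityTheory.iIndepFun.indepFun_finset_of_notMem {Ω ι β : Type*}
    [MeasurableSpace Ω] [MeasurableSpace β] {μ : Measure Ω} {f : ι → Ω → β}
    (hf : iIndepFun f μ) (hmeas : ∀ i, Measurable (f i)) {s : Finset ι} {j : ι}
    (hj : j ∉ s) :
    IndepFun (fun ω (i : s) => f i ω) (f j) μ := by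
  exact (hf.indepFun_finset s {j} (Finset.disjoint_singleton_right.mpr hj) hmeas).comp
    measurable_id (measurable_pi_apply ⟨j, Finset.mem_singleton_self j⟩)

lemma ProbabilityTheory.IndepFun.measure_preimage_le_mul {Ω α β : Type*}
    [MeasurableSpace Ω] [MeasurableSpace α] [MeasurableSpace β] {μ : Measure Ω}
    [IsFiniteMeasure μ] {X : Ω → α} {Y : Ω → β}
    (hXY : IndepFun X Y μ) (hX : Measurable X) (hY : Measurable Y)
    {E E' : Set (α × β)} (hE : MeasurableSet E) (hE' : MeasurableSet E') {C : ℝ≥0∞}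
    (hslice : ∀ x, μ.map Y (Prod.mk x ⁻¹' E) ≤ C * μ.map Y (Prod.mk x ⁻¹' E')) :
    μ ((fun ω => (X ω, Y ω)) ⁻¹' E) ≤ C * μ ((fun ω => (X ω, Y ω)) ⁻¹' E') := by
  have hprod := (indepFun_iff_map_prod_eq_prod_map_map hX.aemeasurable hY.aemeasurable).mp hXY
  have hdisint (F : Set (α × β)) (hF : MeasurableSet F) :
      μ ((fun ω => (X ω, Y ω)) ⁻¹' F) =
        ∫⁻ x, μ.map Y (Prod.mk x ⁻¹' F) ∂μ.map X := by
    rw [← Measure.map_apply (hX.prodMk hY) hF, hprod, Measure.prod_apply hF]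
  rw [hdisint E hE, hdisint E' hE', ← lintegral_const_mul _ (measurable_measure_prodMk_left hE')]
  exact lintegral_mono hslice

section

variable {ι : Type*}

def winRegion (c : ι → ℝ) (j : ι) (s : Finset ι) : Set ((s → ℝ) × ℝ) :=
  {p | ∀ i : s, c i + p.1 i < c j + p.2}

lemma measurableSet_winRegion (c : ι → ℝ) (j : ι) (s : Finset ι) :
    MeasurableSet (winRegion c j s) := by
  simp only [winRegion, Set.ofPred_forall]
  exact .iInter fun i => measurableSet_lt (by fun_prop) (by fun_prop)

lemma setOf_forall_add_lt_add_eq_preimage_winRegion [Fintype ι] [DecidableEq ι] {Ω : Type*}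
    (c : ι → ℝ) (L : ι → Ω → ℝ) (j : ι) :
    {ω | ∀ i, i ≠ j → c i + L i ω < c j + L j ω} =
      (fun ω => (fun i : Finset.univ.erase j => L i ω, L j ω)) ⁻¹' winRegion c j _ := by
  ext ω
  simp [winRegion]

lemma mk_add_two_mem_winRegion {c c' : ι → ℝ} (hcc' : ∀ i, |c i - c' i| ≤ 1) {j : ι}
    {s : Finset ι} {ℓ : s → ℝ} {x : ℝ} (hx : (ℓ, x) ∈ winRegion c j s) :
    (ℓ, x + 2) ∈ winRegion c' j s := fun i => by
  have hi := abs_le.mp (hcc' i)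
  have hj := abs_le.mp (hcc' j)
  have hwin : c i + ℓ i < c j + x := hx i
  change c' i + ℓ i < c' j + (x + 2)
  linarith

end

/-- If the count vectors on neighboring databases differ by at most 1 in each
coordinate, then reporting `argmax_j { n_j + Lap(1/γ) }` satisfies
`(2γ, 0)`-differential privacy: the probability of each output `j` under counts `n`
is at most `e^{2γ}` times its probability under counts `n'`. -/
theorem noisy_max_dp
    {Ω : Type*} [MeasureSpace Ω] [IsProbabilityMeasure (ℙ : Measure Ω)]
    {m : ℕ} (γ : ℝ) (hγ : 0 < γ) (n n' : Fin m → ℤ)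
    (hneighbor : ∀ j, |n j - n' j| ≤ 1)
    (L : Fin m → Ω → ℝ) (hLmeas : ∀ j, Measurable (L j))
    (hindep : iIndepFun L ℙ)
    (hpdf : ∀ j, Measure.map (L j) ℙ =
      volume.withDensity (fun x => ENNReal.ofReal (γ / 2 * Real.exp (-γ * |x|)))) :
    ∀ j : Fin m,
      ℙ {ω | ∀ i, i ≠ j → (n i : ℝ) + L i ω < (n j : ℝ) + L j ω} ≤
        ENNReal.ofReal (Real.exp (2 * γ)) *
          ℙ {ω | ∀ i, i ≠ j → (n' i : ℝ) + L i ω < (n' j : ℝ) + L j ω} := by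
  intro j
  have hnn' (i : Fin m) : |(n i : ℝ) - n' i| ≤ 1 := by exact_mod_cast hneighbor i
  rw [setOf_forall_add_lt_add_eq_preimage_winRegion, setOf_forall_add_lt_add_eq_preimage_winRegion]
  refine (hindep.indepFun_finset_of_notMem hLmeas (Finset.notMem_erase j _)).measure_preimage_le_mul
    (measurable_pi_lambda _ fun i => hLmeas i) (hLmeas j) (measurableSet_winRegion _ _ _)
    (measurableSet_winRegion _ _ _) fun ℓ => ?_
  rw [hpdf j]
  refine withDensity_le_mul_withDensity_of_le_mul_add ENNReal.ofReal_ne_top (fun x => ?_)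
    fun x hx => mk_add_two_mem_winRegion hnn' hx
  rw [← ENNReal.ofReal_mul (exp_nonneg _)]
  exact ENNReal.ofReal_le_ofReal (laplacePDF_le_exp_mul_laplacePDF_add hγ.le abs_two.le x)
end

section
/- For a Laplace random variable L with scale 1/γ and any real t ≥ 0, Pr[L > t] = (1/2)e^{-γt}, and consequently for two independent Laplace(1/γ) variables L₁, L₂ and any real gap g ≥ 0, Pr[L₂ − L₁ > g] = (2 + γg)e^{-γg}/4. -/
open MeasureTheory ProbabilityTheory Real Set

/-! The tail of `Lap(1/γ)` is `e^{-γs}/2` for `s ≥ 0` and `1 - e^{γs}/2` for `s ≤ 0`.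
By independence, `Pr[L₂ - L₁ > g] = ∫ Pr[L₂ > g + x] dLap(x)`, and splitting the line at `-g`
and `0` makes the integrand `γ/2·e^{γx} - γ/4·e^{γg}e^{2γx}`, the constant `γ/4·e^{-γg}`, and
`γ/4·e^{-γg}e^{-2γx}`, contributing `3/8`, `γg/4` and `1/8` times `e^{-γg}`. -/

noncomputable def laplacePDFReal (γ x : ℝ) : ℝ := γ / 2 * exp (-γ * |x|)

noncomputable def laplaceMeasure (γ : ℝ) : Measure ℝ :=
  volume.withDensity fun x => ENNReal.ofReal (laplacePDFReal γ x)

noncomputable def laplaceTail (γ s : ℝ) : ℝ :=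
  if 0 ≤ s then exp (-γ * s) / 2 else 1 - exp (γ * s) / 2

theorem ProbabilityTheory.IndepFun.measure_lt_sub_eq_lintegral_map {Ω : Type*} [MeasurableSpace Ω]
    {P : Measure Ω} [IsFiniteMeasure P] {X Y : Ω → ℝ} (hX : AEMeasurable X P)
    (hY : AEMeasurable Y P) (hXY : IndepFun X Y P) (g : ℝ) :
    P {ω | g < Y ω - X ω} = ∫⁻ x, P.map Y (Ioi (g + x)) ∂P.map X := by
  have hS : MeasurableSet {p : ℝ × ℝ | g < p.2 - p.1} :=
    measurableSet_lt measurable_const (measurable_snd.sub measurable_fst)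
  have hslice (x : ℝ) : Prod.mk x ⁻¹' {p : ℝ × ℝ | g < p.2 - p.1} = Ioi (g + x) := by
    ext y; simp only [mem_preimage, mem_ofPred_eq, mem_Ioi, lt_sub_iff_add_lt]
  simp_rw [← hslice]
  rw [← Measure.prod_apply hS, ← hXY.map_prod_eq_prod_map_map hX hY,
    Measure.map_apply_of_aemeasurable (hX.prodMk hY) hS]
  rfl

section Laplace

variable {γ x s : ℝ}

lemma laplacePDFReal_of_nonneg (hx : 0 ≤ x) : laplacePDFReal γ x = γ / 2 * exp (-γ * x) := by
  rw [laplacePDFReal, abs_of_nonneg hx]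

lemma laplacePDFReal_of_nonpos (hx : x ≤ 0) : laplacePDFReal γ x = γ / 2 * exp (γ * x) := by
  rw [laplacePDFReal, abs_of_nonpos hx, neg_mul_neg]

lemma laplacePDFReal_nonneg (hγ : 0 ≤ γ) (x : ℝ) : 0 ≤ laplacePDFReal γ x := by
  unfold laplacePDFReal; positivity

lemma measurable_laplacePDFReal (γ : ℝ) : Measurable (laplacePDFReal γ) := by
  unfold laplacePDFReal; fun_prop

lemma laplaceTail_of_nonneg (hs : 0 ≤ s) : laplaceTail γ s = exp (-γ * s) / 2 := if_pos hs

lemma laplaceTail_of_nonpos (hs : s ≤ 0) : laplaceTail γ s = 1 - exp (γ * s) / 2 := by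
  rcases hs.lt_or_eq with hs | rfl
  · exact if_neg hs.not_ge
  · norm_num [laplaceTail]

lemma measurable_laplaceTail (γ : ℝ) : Measurable (laplaceTail γ) :=
  Measurable.ite measurableSet_Ici (by fun_prop) (by fun_prop)

lemma integral_laplacePDFReal_mul_laplaceTail_add_interval {g : ℝ} (hg : 0 ≤ g) :
    ∫ x in -g..0, laplacePDFReal γ x * laplaceTail γ (g + x) = γ * g / 4 * exp (-γ * g) := by
  have hf_eq : EqOn (fun x => laplacePDFReal γ x * laplaceTail γ (g + x))
      (fun _ => γ / 4 * exp (-γ * g)) (uIcc (-g) 0) := fun x hx => by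
    rw [uIcc_of_le (neg_nonpos.2 hg)] at hx
    simp only [laplacePDFReal_of_nonpos hx.2,
      laplaceTail_of_nonneg (by linarith [hx.1] : 0 ≤ g + x)]
    have : exp (γ * x) * exp (-γ * (g + x)) = exp (-γ * g) := by
      rw [← exp_add]; ring_nf
    linear_combination (γ / 4) * this
  rw [intervalIntegral.integral_congr hf_eq, intervalIntegral.integral_const, smul_eq_mul]
  ring

variable (hγ : 0 < γ)
include hγ

lemma integrableOn_laplacePDFReal_Ioi (hs : 0 ≤ s) :
    IntegrableOn (laplacePDFReal γ) (Ioi s) :=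
  IntegrableOn.congr_fun ((integrableOn_exp_mul_Ioi (neg_lt_zero.2 hγ) s).const_mul (γ / 2))
    (fun _ hx => (laplacePDFReal_of_nonneg (hs.trans (le_of_lt hx))).symm) measurableSet_Ioi

lemma integrableOn_laplacePDFReal_Iic (hs : s ≤ 0) :
    IntegrableOn (laplacePDFReal γ) (Iic s) :=
  IntegrableOn.congr_fun ((integrableOn_exp_mul_Iic hγ s).const_mul (γ / 2))
    (fun _ hx => (laplacePDFReal_of_nonpos (le_trans hx hs)).symm) measurableSet_Iic

lemma integral_laplacePDFReal_Ioi (hs : 0 ≤ s) :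
    ∫ x in Ioi s, laplacePDFReal γ x = exp (-γ * s) / 2 := by
  rw [setIntegral_congr_fun measurableSet_Ioi
      (fun x hx => laplacePDFReal_of_nonneg (hs.trans (le_of_lt hx))),
    integral_const_mul, integral_exp_mul_Ioi (neg_lt_zero.2 hγ)]
  field_simp

lemma integral_laplacePDFReal_Iic (hs : s ≤ 0) :
    ∫ x in Iic s, laplacePDFReal γ x = exp (γ * s) / 2 := by
  rw [setIntegral_congr_fun measurableSet_Iic
      (fun x hx => laplacePDFReal_of_nonpos (le_trans hx hs)),
    integral_const_mul, integral_exp_mul_Iic hγ]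
  field_simp

lemma integrable_laplacePDFReal : Integrable (laplacePDFReal γ) := by
  rw [← integrableOn_univ, ← Iic_union_Ioi (a := 0)]
  exact (integrableOn_laplacePDFReal_Iic hγ le_rfl).union
    (integrableOn_laplacePDFReal_Ioi hγ le_rfl)

lemma integral_laplacePDFReal : ∫ x, laplacePDFReal γ x = 1 := by
  rw [← intervalIntegral.integral_Iic_add_Ioi (integrableOn_laplacePDFReal_Iic hγ le_rfl)
    (integrableOn_laplacePDFReal_Ioi hγ le_rfl), integral_laplacePDFReal_Iic hγ le_rfl,
    integral_laplacePDFReal_Ioi hγ le_rfl]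
  norm_num

lemma integral_laplacePDFReal_Ioi_eq_laplaceTail (s : ℝ) :
    ∫ x in Ioi s, laplacePDFReal γ x = laplaceTail γ s := by
  rcases le_total 0 s with hs | hs
  · rw [laplaceTail_of_nonneg hs, integral_laplacePDFReal_Ioi hγ hs]
  · have := intervalIntegral.integral_Iic_add_Ioi (integrableOn_laplacePDFReal_Iic hγ hs)
      (integrable_laplacePDFReal hγ).integrableOn
    rw [integral_laplacePDFReal hγ, integral_laplacePDFReal_Iic hγ hs] at this
    rw [laplaceTail_of_nonpos hs]
    linarith

lemma laplaceTail_mem_Icc (s : ℝ) : laplaceTail γ s ∈ Icc 0 1 := by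
  have hp : 0 ≤ laplacePDFReal γ := laplacePDFReal_nonneg hγ.le
  rw [← integral_laplacePDFReal_Ioi_eq_laplaceTail hγ, ← integral_laplacePDFReal hγ]
  exact ⟨setIntegral_nonneg measurableSet_Ioi fun x _ => hp x,
    setIntegral_le_integral (integrable_laplacePDFReal hγ) (ae_of_all _ hp)⟩

lemma laplaceMeasure_Ioi (s : ℝ) :
    laplaceMeasure γ (Ioi s) = ENNReal.ofReal (laplaceTail γ s) := by
  rw [laplaceMeasure, withDensity_apply _ measurableSet_Ioi,
    ← ofReal_integral_eq_lintegral_ofReal (integrable_laplacePDFReal hγ).integrableOn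
      (ae_of_all _ (laplacePDFReal_nonneg hγ.le)),
    integral_laplacePDFReal_Ioi_eq_laplaceTail hγ]

lemma integrable_laplacePDFReal_mul_laplaceTail_add (g : ℝ) :
    Integrable fun x => laplacePDFReal γ x * laplaceTail γ (g + x) := by
  simp_rw [mul_comm (laplacePDFReal γ _)]
  refine (integrable_laplacePDFReal hγ).bdd_mul (c := 1)
    ((measurable_laplaceTail γ).comp (measurable_const_add g)).aestronglyMeasurable
    (ae_of_all _ fun x => ?_)
  obtain ⟨h0, h1⟩ := laplaceTail_mem_Icc hγ (g + x)
  rwa [Real.norm_of_nonneg h0]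

lemma integral_laplacePDFReal_mul_laplaceTail_add_Iic_neg {g : ℝ} (hg : 0 ≤ g) :
    ∫ x in Iic (-g), laplacePDFReal γ x * laplaceTail γ (g + x) = 3 / 8 * exp (-γ * g) := by
  have hf_eq : EqOn (fun x => laplacePDFReal γ x * laplaceTail γ (g + x))
      (fun x => γ / 2 * exp (γ * x) - γ / 4 * exp (γ * g) * exp (2 * γ * x)) (Iic (-g)) :=
    fun x (hx : x ≤ -g) => by
      simp only [laplacePDFReal_of_nonpos (hx.trans (neg_nonpos.2 hg)),
        laplaceTail_of_nonpos (by linarith : g + x ≤ 0)]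
      have : exp (γ * x) * exp (γ * (g + x)) = exp (γ * g) * exp (2 * γ * x) := by
        rw [← exp_add, ← exp_add]; ring_nf
      linear_combination (-γ / 4) * this
  rw [setIntegral_congr_fun measurableSet_Iic hf_eq, integral_sub
    ((integrableOn_exp_mul_Iic hγ _).const_mul _)
    ((integrableOn_exp_mul_Iic (by positivity) _).const_mul _),
    integral_const_mul, integral_const_mul, integral_exp_mul_Iic hγ,
    integral_exp_mul_Iic (by positivity)]
  set E := exp (-γ * g)
  have hsq : exp (2 * γ * -g) = E * E := by rw [← exp_add]; ring_nf
  have hinv : exp (γ * g) * E = 1 := by rw [← exp_add]; simp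
  rw [show γ * -g = -γ * g by ring, hsq]
  linear_combination (E / 2 - E * exp (γ * g) * E / 8) * mul_inv_cancel₀ hγ.ne' - E / 8 * hinv

lemma integral_laplacePDFReal_mul_laplaceTail_add_Ioi_zero {g : ℝ} (hg : 0 ≤ g) :
    ∫ x in Ioi 0, laplacePDFReal γ x * laplaceTail γ (g + x) = 1 / 8 * exp (-γ * g) := by
  have hf_eq : EqOn (fun x => laplacePDFReal γ x * laplaceTail γ (g + x))
      (fun x => γ / 4 * exp (-γ * g) * exp (-2 * γ * x)) (Ioi 0) := fun x (hx : 0 < x) => by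
    simp only [laplacePDFReal_of_nonneg hx.le, laplaceTail_of_nonneg (by linarith : 0 ≤ g + x)]
    have : exp (-γ * x) * exp (-γ * (g + x)) = exp (-γ * g) * exp (-2 * γ * x) := by
      rw [← exp_add, ← exp_add]; ring_nf
    linear_combination (γ / 4) * this
  rw [setIntegral_congr_fun measurableSet_Ioi hf_eq, integral_const_mul,
    integral_exp_mul_Ioi (by linarith)]
  simp only [mul_zero, exp_zero]
  field_simp
  norm_num

lemma integral_laplacePDFReal_mul_laplaceTail_add {g : ℝ} (hg : 0 ≤ g) :
    ∫ x, laplacePDFReal γ x * laplaceTail γ (g + x) = (2 + γ * g) * exp (-γ * g) / 4 := by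
  have hf := integrable_laplacePDFReal_mul_laplaceTail_add hγ g
  rw [← intervalIntegral.integral_Iic_add_Ioi hf.integrableOn hf.integrableOn,
    ← intervalIntegral.integral_interval_add_Ioi hf.integrableOn hf.integrableOn,
    integral_laplacePDFReal_mul_laplaceTail_add_Iic_neg hγ hg,
    integral_laplacePDFReal_mul_laplaceTail_add_interval hg,
    integral_laplacePDFReal_mul_laplaceTail_add_Ioi_zero hγ hg]
  ring

lemma lintegral_laplaceMeasure_Ioi_add {g : ℝ} (hg : 0 ≤ g) :
    ∫⁻ x, laplaceMeasure γ (Ioi (g + x)) ∂laplaceMeasure γ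
      = ENNReal.ofReal ((2 + γ * g) * exp (-γ * g) / 4) := by
  simp_rw [laplaceMeasure_Ioi hγ]
  rw [laplaceMeasure, lintegral_withDensity_eq_lintegral_mul _
      (measurable_laplacePDFReal γ).ennreal_ofReal
      (g := fun x => ENNReal.ofReal (laplaceTail γ (g + x)))
      ((measurable_laplaceTail γ).comp (measurable_const_add g)).ennreal_ofReal]
  simp_rw [Pi.mul_apply, ← ENNReal.ofReal_mul (laplacePDFReal_nonneg hγ.le _)]
  rw [← ofReal_integral_eq_lintegral_ofReal (integrable_laplacePDFReal_mul_laplaceTail_add hγ g)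
      (ae_of_all _ fun x => mul_nonneg (laplacePDFReal_nonneg hγ.le x)
        (laplaceTail_mem_Icc hγ _).1),
    integral_laplacePDFReal_mul_laplaceTail_add hγ hg]

end Laplace

/-- For a Laplace random variable `L` with scale `1/γ` and `t ≥ 0`,
`Pr[L > t] = (1/2)e^{-γt}`; and for two independent Laplace(1/γ) variables `L₁, L₂`
and `g ≥ 0`, `Pr[L₂ - L₁ > g] = (2 + γg) e^{-γg} / 4`. -/
theorem laplace_tail_and_diff_tail
    {Ω : Type*} [MeasureSpace Ω] [IsProbabilityMeasure (ℙ : Measure Ω)]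
    (γ : ℝ) (hγ : 0 < γ)
    (L L₁ L₂ : Ω → ℝ)
    (hL : Measurable L) (hL₁ : Measurable L₁) (hL₂ : Measurable L₂)
    (hindep : IndepFun L₁ L₂ ℙ)
    (hpdf : ∀ X ∈ [L, L₁, L₂], Measure.map X ℙ =
      volume.withDensity (fun x => ENNReal.ofReal (γ / 2 * Real.exp (-γ * |x|))))
    (t g : ℝ) (ht : 0 ≤ t) (hg : 0 ≤ g) :
    ℙ {ω | t < L ω} = ENNReal.ofReal ((1 / 2) * Real.exp (-γ * t)) ∧
    ℙ {ω | g < L₂ ω - L₁ ω} = ENNReal.ofReal ((2 + γ * g) * Real.exp (-γ * g) / 4) := by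
  have hlaw : ∀ X ∈ [L, L₁, L₂], Measure.map X ℙ = laplaceMeasure γ := hpdf
  constructor
  · change ℙ (L ⁻¹' Ioi t) = _
    rw [← Measure.map_apply hL measurableSet_Ioi, hlaw L (by simp),
      laplaceMeasure_Ioi hγ, laplaceTail_of_nonneg ht, div_eq_inv_mul, one_div]
  · rw [hindep.measure_lt_sub_eq_lintegral_map hL₁.aemeasurable hL₂.aemeasurable,
      hlaw L₁ (by simp), hlaw L₂ (by simp), lintegral_laplaceMeasure_Ioi_add hγ hg]
end
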